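/- arXiv:math/0501488 — 2 statements merged into one kernel-verified Lean document; each statement's English description precedes it below -/
import Mathlib

section
/- Let H : ℝ³ → ℝ be positively homogeneous of degree 1 and twice continuously differentiable on ℝ³ ∖ {0}, and suppose that for every pair of orthonormal vectors a, b ∈ ℝ³ the function f(φ) = H(cos φ · a + sin φ · b) satisfies f(φ) + f''(φ) = 0 for all φ ∈ ℝ. Then there exists a₀ ∈ ℝ³ such that H(x) = ⟨a₀, x⟩ for all x ∈ ℝ³. -/
open Real
open scoped RealInnerProductSpace

/-!
Along a great circle through orthonormal `a, b`, the function `φ ↦ H (cos φ • a + sin φ • b)`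
solves `f + f'' = 0`, so it equals `H a * cos φ + H b * sin φ`. With homogeneity this makes `H`
linear on every plane, in particular additive on orthogonal pairs and odd along each axis.
Expanding `x` in an orthonormal basis `e` then gives `H x = ⟪∑ i, H (e i) • e i, x⟫`.
-/

theorem eq_zero_of_hasDerivAt_of_hasDerivAt_neg {g g' : ℝ → ℝ}
    (hg : ∀ x, HasDerivAt g (g' x) x) (hg' : ∀ x, HasDerivAt g' (-g x) x)
    (h₀ : g 0 = 0) (h₀' : g' 0 = 0) (x : ℝ) : g x = 0 := by
  -- the energy `g² + g'²` is conserved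
  have henergy : ∀ y, HasDerivAt (fun y => g y ^ 2 + g' y ^ 2) 0 y := fun y =>
    (((hg y).pow 2).add ((hg' y).pow 2)).congr_deriv (by ring)
  have hx : g x ^ 2 + g' x ^ 2 = g 0 ^ 2 + g' 0 ^ 2 :=
    is_const_of_deriv_eq_zero (fun y => (henergy y).differentiableAt)
      (fun y => (henergy y).deriv) x 0
  rw [h₀, h₀'] at hx
  nlinarith [sq_nonneg (g x), sq_nonneg (g' x)]

theorem eq_cos_sin_of_hasDerivAt_of_hasDerivAt_neg {f f' : ℝ → ℝ}
    (hf : ∀ x, HasDerivAt f (f' x) x) (hf' : ∀ x, HasDerivAt f' (-f x) x) (x : ℝ) :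
    f x = f 0 * cos x + f' 0 * sin x := by
  have hg : ∀ x, HasDerivAt (fun x => f x - (f 0 * cos x + f' 0 * sin x))
      (f' x - (f' 0 * cos x - f 0 * sin x)) x := fun x =>
    ((hf x).sub (((hasDerivAt_cos x).const_mul _).add ((hasDerivAt_sin x).const_mul _))).congr_deriv
      (by ring)
  have hg' : ∀ x, HasDerivAt (fun x => f' x - (f' 0 * cos x - f 0 * sin x))
      (-(f x - (f 0 * cos x + f' 0 * sin x))) x := fun x =>
    ((hf' x).sub (((hasDerivAt_cos x).const_mul (f' 0)).sub
      ((hasDerivAt_sin x).const_mul (f 0)))).congr_deriv (by ring)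
  have := eq_zero_of_hasDerivAt_of_hasDerivAt_neg hg hg' (by simp) (by simp) x
  linarith

theorem eq_cos_sin_of_add_deriv_deriv_eq_zero {f : ℝ → ℝ} (hf : ContDiff ℝ 2 f)
    (hode : ∀ x, f x + deriv (deriv f) x = 0) (x : ℝ) :
    f x = f 0 * cos x + deriv f 0 * sin x := by
  obtain ⟨hdiff, -, hderiv⟩ := contDiff_succ_iff_deriv.mp (show ContDiff ℝ (1 + 1) f from hf)
  refine eq_cos_sin_of_hasDerivAt_of_hasDerivAt_neg (fun x => (hdiff x).hasDerivAt) (fun x => ?_) x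
  rw [show -f x = deriv (deriv f) x by linarith [hode x]]
  exact (hderiv.differentiable one_ne_zero x).hasDerivAt

section GreatCircle

variable {E : Type*} [NormedAddCommGroup E] [InnerProductSpace ℝ E]

def IsGreatCircleSolution (H : E → ℝ) : Prop :=
  ∀ a b : E, ‖a‖ = 1 → ‖b‖ = 1 → ⟪a, b⟫ = 0 →
    ∀ φ : ℝ, H (cos φ • a + sin φ • b) + deriv (deriv fun s : ℝ => H (cos s • a + sin s • b)) φ = 0

theorem cos_smul_add_sin_smul_ne_zero {a b : E} (ha : ‖a‖ = 1) (hb : ‖b‖ = 1) (hab : ⟪a, b⟫ = 0)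
    (φ : ℝ) : cos φ • a + sin φ • b ≠ 0 := by
  have : ‖cos φ • a + sin φ • b‖ ^ 2 = 1 := by
    rw [norm_add_sq_real, norm_smul, norm_smul, real_inner_smul_left, real_inner_smul_right, hab,
      ha, hb, norm_eq_abs, norm_eq_abs, ← cos_sq_add_sin_sq φ]
    simp
  intro h
  simp [h] at this

variable {H : E → ℝ}

theorem IsGreatCircleSolution.map_cos_smul_add_sin_smul (hH : IsGreatCircleSolution H)
    (hsmooth : ContDiffOn ℝ 2 H {0}ᶜ) {a b : E} (ha : ‖a‖ = 1) (hb : ‖b‖ = 1) (hab : ⟪a, b⟫ = 0)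
    (φ : ℝ) : H (cos φ • a + sin φ • b) = cos φ * H a + sin φ * H b := by
  set f : ℝ → ℝ := fun s => H (cos s • a + sin s • b)
  have hf : ContDiff ℝ 2 f :=
    hsmooth.comp_contDiff (by fun_prop) (cos_smul_add_sin_smul_ne_zero ha hb hab)
  have hsol := eq_cos_sin_of_add_deriv_deriv_eq_zero hf (hH a b ha hb hab)
  have hb' : H b = deriv f 0 := by simpa [f] using hsol (π / 2)
  simpa [f, hb', mul_comm] using hsol φ

theorem IsGreatCircleSolution.map_smul_add_smul (hH : IsGreatCircleSolution H)
    (hsmooth : ContDiffOn ℝ 2 H {0}ᶜ) (hhom : ∀ t : ℝ, 0 ≤ t → ∀ x : E, H (t • x) = t * H x)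
    {a b : E} (ha : ‖a‖ = 1) (hb : ‖b‖ = 1) (hab : ⟪a, b⟫ = 0) (c s : ℝ) :
    H (c • a + s • b) = c * H a + s * H b := by
  -- polar coordinates of `(c, s)`
  set z : ℂ := ⟨c, s⟩
  have hz : c • a + s • b = ‖z‖ • (cos z.arg • a + sin z.arg • b) := by
    rw [smul_add, smul_smul, smul_smul, Complex.norm_mul_cos_arg, Complex.norm_mul_sin_arg]
  rw [hz, hhom _ (norm_nonneg z), hH.map_cos_smul_add_sin_smul hsmooth ha hb hab, mul_add,
    ← mul_assoc, ← mul_assoc, Complex.norm_mul_cos_arg, Complex.norm_mul_sin_arg]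

theorem IsGreatCircleSolution.map_add_of_inner_eq_zero (hH : IsGreatCircleSolution H)
    (hsmooth : ContDiffOn ℝ 2 H {0}ᶜ) (hhom : ∀ t : ℝ, 0 ≤ t → ∀ x : E, H (t • x) = t * H x)
    {x y : E} (hxy : ⟪x, y⟫ = 0) : H (x + y) = H x + H y := by
  have h₀ : H 0 = 0 := by simpa using hhom 0 le_rfl 0
  rcases eq_or_ne x 0 with rfl | hx
  · rw [zero_add, h₀, zero_add]
  rcases eq_or_ne y 0 with rfl | hy
  · rw [add_zero, h₀, add_zero]
  have hx' := smul_inv_smul₀ (norm_ne_zero_iff.mpr hx) x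
  have hy' := smul_inv_smul₀ (norm_ne_zero_iff.mpr hy) y
  have hxy' : ⟪‖x‖⁻¹ • x, ‖y‖⁻¹ • y⟫ = 0 := by
    rw [real_inner_smul_left, real_inner_smul_right, hxy, mul_zero, mul_zero]
  have hxn : ‖‖x‖⁻¹ • x‖ = 1 := by simpa using norm_smul_inv_norm (𝕜 := ℝ) hx
  have hyn : ‖‖y‖⁻¹ • y‖ = 1 := by simpa using norm_smul_inv_norm (𝕜 := ℝ) hy
  conv_lhs => rw [← hx', ← hy']
  rw [hH.map_smul_add_smul hsmooth hhom hxn hyn hxy',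
    ← hhom _ (norm_nonneg x), ← hhom _ (norm_nonneg y), hx', hy']

theorem map_sum_of_pairwise_inner_eq_zero (hadd : ∀ x y : E, ⟪x, y⟫ = 0 → H (x + y) = H x + H y)
    {ι : Type*} {v : ι → E} (hv : Pairwise fun i j => ⟪v i, v j⟫ = 0) (s : Finset ι) :
    H (∑ i ∈ s, v i) = ∑ i ∈ s, H (v i) := by
  classical
  induction s using Finset.induction_on with
  | empty => simpa using hadd 0 0 (inner_zero_left 0)
  | insert j s hj ih =>
    have hjs : ⟪v j, ∑ i ∈ s, v i⟫ = 0 := by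
      rw [inner_sum]
      exact Finset.sum_eq_zero fun i hi => hv (ne_of_mem_of_not_mem hi hj).symm
    rw [Finset.sum_insert hj, Finset.sum_insert hj, hadd _ _ hjs, ih]

theorem IsGreatCircleSolution.exists_eq_inner [FiniteDimensional ℝ E]
    (hdim : 2 ≤ Module.finrank ℝ E) (hH : IsGreatCircleSolution H)
    (hsmooth : ContDiffOn ℝ 2 H {0}ᶜ) (hhom : ∀ t : ℝ, 0 ≤ t → ∀ x : E, H (t • x) = t * H x) :
    ∃ a₀ : E, ∀ x, H x = ⟪a₀, x⟫ := by
  have : Nontrivial (Fin (Module.finrank ℝ E)) := Fin.nontrivial_iff_two_le.mpr hdim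
  set e := stdOrthonormalBasis ℝ E
  have hsmul : ∀ i (c : ℝ), H (c • e i) = c * H (e i) := by
    intro i c
    obtain ⟨j, hji⟩ := exists_ne i
    simpa using hH.map_smul_add_smul hsmooth hhom (e.orthonormal.1 i) (e.orthonormal.1 j)
      (e.orthonormal.2 hji.symm) c 0
  refine ⟨∑ i, H (e i) • e i, fun x => ?_⟩
  calc H x = H (∑ i, ⟪e i, x⟫ • e i) := by rw [e.sum_repr']
    _ = ∑ i, ⟪e i, x⟫ * H (e i) := by
      rw [map_sum_of_pairwise_inner_eq_zero (fun _ _ => hH.map_add_of_inner_eq_zero hsmooth hhom)]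
      · simp only [hsmul]
      · intro i j hij
        rw [real_inner_smul_left, real_inner_smul_right, e.orthonormal.2 hij, mul_zero, mul_zero]
    _ = ⟪∑ i, H (e i) • e i, x⟫ := by
      simp only [sum_inner, real_inner_smul_left, mul_comm]

end GreatCircle

theorem homogeneous_spherical_solution_is_linear
    (H : EuclideanSpace ℝ (Fin 3) → ℝ)
    (hhom : ∀ t : ℝ, 0 ≤ t → ∀ x : EuclideanSpace ℝ (Fin 3), H (t • x) = t * H x)
    (hsmooth : ContDiffOn ℝ 2 H {(0 : EuclideanSpace ℝ (Fin 3))}ᶜ)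
    (heq : ∀ a b : EuclideanSpace ℝ (Fin 3), ‖a‖ = 1 → ‖b‖ = 1 → ⟪a, b⟫ = 0 →
      ∀ φ : ℝ,
        H (Real.cos φ • a + Real.sin φ • b) +
          deriv (deriv (fun s : ℝ => H (Real.cos s • a + Real.sin s • b))) φ = 0) :
    ∃ a₀ : EuclideanSpace ℝ (Fin 3),
      ∀ x : EuclideanSpace ℝ (Fin 3), H x = ⟪a₀, x⟫ :=
  IsGreatCircleSolution.exists_eq_inner (by simp) heq hsmooth hhom
end

section
/- Let B ⊂ ℝ³ be a convex body whose support function H (extended to ℝ³ positively homogeneously of degree 1) is three times continuously differentiable on ℝ³ ∖ {0}. Fix a unit vector Ω and orthonormal vectors e₁, e₂ orthogonal to Ω, and set u(τ) = cos τ·e₁ + sin τ·e₂, E(τ) = −sin τ·e₁ + cos τ·e₂, p(ν,τ) = cos ν·u(τ) + sin ν·Ω. For each (ν,τ) define R*(ν,τ) = f_{ν,τ}(0) + f_{ν,τ}''(0), where f_{ν,τ}(s) = H(cos s·p(ν,τ) + sin s·E(τ)). Then ∫_0^{2π} (∂R*/∂ν)(0,τ) dτ = 0. -/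
/-!
Write `f_{ν,τ}(s) = K(ν, s)`, so that `R*(ν, τ) = K(ν, 0) + ∂ₛ²K(ν, 0)`. Since `K` is `C³`, the
`ν`-derivative commutes with `∂ₛ²`, so `∂_ν R*(0, τ) = g(0) + g''(0)` for `g = ∂_ν K(0, ·)`. At
`ν = 0` the circle `s ↦ cos s • p + sin s • E` is `s ↦ u(τ + s)` and its `ν`-variation is
`cos s • Ω`, so `g(s) = cos s · φ(τ + s)` with `φ(σ) = DH(u(σ)) Ω`. For such `g` one has
`g(0) + g''(0) = φ''(τ)`, and the integral of `φ''` over a period of the `2π`-periodic `φ` vanishes.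
-/

open Real Function
open scoped RealInnerProductSpace

/-- For the support function `f` of a planar convex curve, parametrised by the angle of the
normal, `f + f''` is the radius of curvature; this is `R*` evaluated at the normal `s = 0`. -/
noncomputable def radiusOfCurvature {F : Type*} [NormedAddCommGroup F] [NormedSpace ℝ F]
    (f : ℝ → F) : F :=
  f 0 + deriv (deriv f) 0

lemma fderiv_fun_fderiv_apply {E F : Type*} [NormedAddCommGroup E] [NormedSpace ℝ E]
    [NormedAddCommGroup F] [NormedSpace ℝ F] {f : E → F} {x : E}
    (hf : DifferentiableAt ℝ (fderiv ℝ f) x) (v w : E) :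
    fderiv ℝ (fun y => fderiv ℝ f y v) x w = fderiv ℝ (fderiv ℝ f) x w v := by
  rw [fderiv_clm_apply hf (differentiableAt_const v)]
  simp

section PartialDeriv

variable {F : Type*} [NormedAddCommGroup F] [NormedSpace ℝ F] {K : ℝ × ℝ → F}

noncomputable def partialFst (K : ℝ × ℝ → F) (q : ℝ × ℝ) : F := deriv (fun x => K (x, q.2)) q.1

noncomputable def partialSnd (K : ℝ × ℝ → F) (q : ℝ × ℝ) : F := deriv (fun y => K (q.1, y)) q.2

lemma partialFst_eq_fderiv {q : ℝ × ℝ} (hK : DifferentiableAt ℝ K q) :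
    partialFst K q = fderiv ℝ K q (1, 0) := by
  have := hK.hasFDerivAt.comp_hasDerivAt q.1
    ((hasDerivAt_id q.1).prodMk (hasDerivAt_const q.1 q.2))
  simpa [partialFst, Function.comp_def] using this.deriv

lemma partialSnd_eq_fderiv {q : ℝ × ℝ} (hK : DifferentiableAt ℝ K q) :
    partialSnd K q = fderiv ℝ K q (0, 1) := by
  have := hK.hasFDerivAt.comp_hasDerivAt q.2
    ((hasDerivAt_const q.2 q.1).prodMk (hasDerivAt_id q.2))
  simpa [partialSnd, Function.comp_def] using this.deriv

lemma Differentiable.partialFst_eq (hK : Differentiable ℝ K) :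
    partialFst K = fun q => fderiv ℝ K q (1, 0) :=
  funext fun q => partialFst_eq_fderiv (hK q)

lemma Differentiable.partialSnd_eq (hK : Differentiable ℝ K) :
    partialSnd K = fun q => fderiv ℝ K q (0, 1) :=
  funext fun q => partialSnd_eq_fderiv (hK q)

lemma ContDiff.partialFst {m n : WithTop ℕ∞} (hK : ContDiff ℝ n K) (hmn : m + 1 ≤ n) :
    ContDiff ℝ m (_root_.partialFst K) := by
  rw [((hK.of_le (le_add_self.trans hmn)).differentiable one_ne_zero).partialFst_eq]
  exact (hK.fderiv_right hmn).clm_apply contDiff_const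

lemma ContDiff.partialSnd {m n : WithTop ℕ∞} (hK : ContDiff ℝ n K) (hmn : m + 1 ≤ n) :
    ContDiff ℝ m (_root_.partialSnd K) := by
  rw [((hK.of_le (le_add_self.trans hmn)).differentiable one_ne_zero).partialSnd_eq]
  exact (hK.fderiv_right hmn).clm_apply contDiff_const

lemma partialFst_partialSnd_comm (hK : ContDiff ℝ 2 K) :
    partialFst (partialSnd K) = partialSnd (partialFst K) := by
  funext q
  have hd : Differentiable ℝ K := hK.differentiable two_ne_zero
  have hdd : DifferentiableAt ℝ (fderiv ℝ K) q :=
    (hK.fderiv_right (m := 1) (by norm_num)).differentiable one_ne_zero q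
  rw [hd.partialSnd_eq, hd.partialFst_eq,
    partialFst_eq_fderiv (hdd.clm_apply (differentiableAt_const _)),
    partialSnd_eq_fderiv (hdd.clm_apply (differentiableAt_const _)),
    fderiv_fun_fderiv_apply hdd, fderiv_fun_fderiv_apply hdd,
    (hK.contDiffAt.isSymmSndFDerivAt (by simp)).eq]

lemma deriv_radiusOfCurvature_slice (hK : ContDiff ℝ 3 K) (x : ℝ) :
    deriv (fun x' => radiusOfCurvature fun y => K (x', y)) x
      = radiusOfCurvature fun y => partialFst K (x, y) := by
  have hslice {G : ℝ × ℝ → F} (hG : Differentiable ℝ G) :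
      DifferentiableAt ℝ (fun x' => G (x', 0)) x :=
    (hG _).comp x (differentiableAt_id.prodMk (differentiableAt_const 0))
  have hK'' : ContDiff ℝ 1 (partialSnd (partialSnd K)) :=
    (hK.partialSnd (m := 2) (by norm_num)).partialSnd le_rfl
  have hcomm : partialFst (partialSnd (partialSnd K)) = partialSnd (partialSnd (partialFst K)) := by
    rw [partialFst_partialSnd_comm (hK.partialSnd (by norm_num)),
      partialFst_partialSnd_comm (hK.of_le (by norm_num))]
  change deriv (fun x' => K (x', 0) + partialSnd (partialSnd K) (x', 0)) x = _
  rw [deriv_fun_add (hslice (hK.differentiable (by norm_num)))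
    (hslice (hK''.differentiable one_ne_zero))]
  exact congrArg (partialFst K (x, 0) + ·) (congrFun hcomm (x, 0))

end PartialDeriv

lemma deriv_deriv_cos_mul {ψ : ℝ → ℝ} (hψ : ContDiff ℝ 2 ψ) (x : ℝ) :
    deriv (deriv fun s => cos s * ψ s) x
      = -cos x * ψ x - 2 * sin x * deriv ψ x + cos x * deriv (deriv ψ) x := by
  have hψ' : Differentiable ℝ ψ := hψ.differentiable two_ne_zero
  have hψ'' : Differentiable ℝ (deriv ψ) := hψ.differentiable_deriv_two
  have h1 : deriv (fun s => cos s * ψ s) = fun s => -(sin s * ψ s) + cos s * deriv ψ s := by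
    funext s
    simpa using ((hasDerivAt_cos s).fun_mul (hψ' s).hasDerivAt).deriv
  rw [h1, (((hasDerivAt_sin x).fun_mul (hψ' x).hasDerivAt).fun_neg.fun_add
    ((hasDerivAt_cos x).fun_mul (hψ'' x).hasDerivAt)).deriv]
  ring

lemma radiusOfCurvature_cos_mul {ψ : ℝ → ℝ} (hψ : ContDiff ℝ 2 ψ) :
    radiusOfCurvature (fun s => cos s * ψ s) = deriv (deriv ψ) 0 := by
  simp [radiusOfCurvature, deriv_deriv_cos_mul hψ]

lemma deriv_deriv_comp_const_add {𝕜 F : Type*} [NontriviallyNormedField 𝕜]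
    [NormedAddCommGroup F] [NormedSpace 𝕜 F] (f : 𝕜 → F) (a x : 𝕜) :
    deriv (deriv fun y => f (a + y)) x = deriv (deriv f) (a + x) := by
  rw [show (deriv fun y => f (a + y)) = fun y => deriv f (a + y) from
    funext (deriv_comp_const_add f a), deriv_comp_const_add]

lemma Function.Periodic.deriv {𝕜 F : Type*} [NontriviallyNormedField 𝕜] [NormedAddCommGroup F]
    [NormedSpace 𝕜 F] {f : 𝕜 → F} {c : 𝕜} (hf : Periodic f c) : Periodic (_root_.deriv f) c :=
  fun x => by rw [← deriv_comp_add_const, hf.funext]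

lemma Function.Periodic.intervalIntegral_deriv_eq_zero {F : Type*} [NormedAddCommGroup F]
    [NormedSpace ℝ F] [CompleteSpace F] {f : ℝ → F} {T : ℝ} (hf : ContDiff ℝ 1 f)
    (hT : Periodic f T) : ∫ x in 0..T, _root_.deriv f x = 0 := by
  rw [intervalIntegral.integral_deriv_eq_sub (fun x _ => hf.differentiable one_ne_zero x)
    ((hf.continuous_deriv le_rfl).intervalIntegrable _ _), sub_eq_zero]
  simpa using hT 0

section GreatCircle

variable {V : Type*} [NormedAddCommGroup V] [InnerProductSpace ℝ V] {H : V → ℝ} {a b w : V}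

lemma norm_cos_smul_add_sin_smul (ha : ‖a‖ = 1) (hb : ‖b‖ = 1) (hab : ⟪a, b⟫ = 0) (t : ℝ) :
    ‖cos t • a + sin t • b‖ = 1 := by
  have h : ⟪cos t • a, sin t • b⟫ = 0 := by
    rw [real_inner_smul_left, real_inner_smul_right, hab, mul_zero, mul_zero]
  rw [← pow_eq_one_iff_of_nonneg (norm_nonneg _) two_ne_zero, sq,
    norm_add_sq_eq_norm_sq_add_norm_sq_real h, norm_smul, norm_smul, ha, hb]
  simp [← sq, cos_sq_add_sin_sq]

lemma contDiff_fderiv_apply_comp (hH : ContDiffOn ℝ 3 H {0}ᶜ) {γ : ℝ → V}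
    (hγ : ContDiff ℝ 2 γ) (hγ0 : ∀ t, γ t ≠ 0) (w : V) :
    ContDiff ℝ 2 fun t => fderiv ℝ H (γ t) w :=
  ((hH.fderiv_of_isOpen isOpen_compl_singleton (by norm_num)).comp_contDiff hγ hγ0).clm_apply
    contDiff_const

lemma contDiff_comp_greatCircle (hH : ContDiffOn ℝ 3 H {0}ᶜ)
    (ha : ‖a‖ = 1) (hb : ‖b‖ = 1) (hw : ‖w‖ = 1)
    (hab : ⟪a, b⟫ = 0) (haw : ⟪a, w⟫ = 0) (hwb : ⟪w, b⟫ = 0) :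
    ContDiff ℝ 3 (fun q : ℝ × ℝ => H (cos q.2 • (cos q.1 • a + sin q.1 • w) + sin q.2 • b)) := by
  refine hH.comp_contDiff (by fun_prop) fun q => ?_
  have hpb : ⟪cos q.1 • a + sin q.1 • w, b⟫ = 0 := by
    rw [inner_add_left, real_inner_smul_left, real_inner_smul_left, hab, hwb]; ring
  rw [Set.mem_compl_singleton_iff, ← norm_ne_zero_iff,
    norm_cos_smul_add_sin_smul (norm_cos_smul_add_sin_smul ha hw haw _) hb hpb]
  exact one_ne_zero

lemma partialFst_comp_greatCircle_zero {s : ℝ}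
    (hH : DifferentiableAt ℝ H (cos s • a + sin s • b)) :
    partialFst (fun q : ℝ × ℝ => H (cos q.2 • (cos q.1 • a + sin q.1 • w) + sin q.2 • b)) (0, s)
      = cos s * fderiv ℝ H (cos s • a + sin s • b) w := by
  have hc : HasDerivAt (fun ν : ℝ => cos s • (cos ν • a + sin ν • w) + sin s • b)
      (cos s • w) 0 := by
    simpa using (((hasDerivAt_cos 0).smul_const a).add
      ((hasDerivAt_sin 0).smul_const w)).const_smul (cos s) |>.add_const (sin s • b)
  have hH₀ : HasFDerivAt H (fderiv ℝ H (cos s • a + sin s • b))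
      (cos s • (cos 0 • a + sin 0 • w) + sin s • b) := by
    simpa using hH.hasFDerivAt
  simpa [partialFst, Function.comp_def] using (hH₀.comp_hasDerivAt 0 hc).deriv

lemma deriv_radiusOfCurvature_greatCircle (hH : ContDiffOn ℝ 3 H {0}ᶜ)
    (ha : ‖a‖ = 1) (hb : ‖b‖ = 1) (hw : ‖w‖ = 1)
    (hab : ⟪a, b⟫ = 0) (haw : ⟪a, w⟫ = 0) (hwb : ⟪w, b⟫ = 0) :
    deriv (fun ν => radiusOfCurvature fun s => H (cos s • (cos ν • a + sin ν • w) + sin s • b)) 0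
      = deriv (deriv fun s => fderiv ℝ H (cos s • a + sin s • b) w) 0 := by
  have hne : ∀ s, cos s • a + sin s • b ≠ 0 := fun s =>
    norm_ne_zero_iff.mp (by rw [norm_cos_smul_add_sin_smul ha hb hab]; exact one_ne_zero)
  have hdiff : ∀ s, DifferentiableAt ℝ H (cos s • a + sin s • b) := fun s =>
    (hH.contDiffAt (isOpen_compl_singleton.mem_nhds (hne s))).differentiableAt (by norm_num)
  rw [deriv_radiusOfCurvature_slice (contDiff_comp_greatCircle hH ha hb hw hab haw hwb),
    funext fun s => partialFst_comp_greatCircle_zero (hdiff s),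
    radiusOfCurvature_cos_mul (contDiff_fderiv_apply_comp hH (by fun_prop) hne w)]

end GreatCircle

theorem belt_derivative_integral_vanishes_general
    (H : EuclideanSpace ℝ (Fin 3) → ℝ)
    (hsmooth : ContDiffOn ℝ 3 H {(0 : EuclideanSpace ℝ (Fin 3))}ᶜ)
    (Ω e₁ e₂ : EuclideanSpace ℝ (Fin 3))
    (hΩ : ‖Ω‖ = 1) (he₁ : ‖e₁‖ = 1) (he₂ : ‖e₂‖ = 1)
    (h₁₂ : ⟪e₁, e₂⟫ = 0) (h₁Ω : ⟪e₁, Ω⟫ = 0) (h₂Ω : ⟪e₂, Ω⟫ = 0)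
    (u E : ℝ → EuclideanSpace ℝ (Fin 3)) (p : ℝ → ℝ → EuclideanSpace ℝ (Fin 3))
    (hu : ∀ τ : ℝ, u τ = Real.cos τ • e₁ + Real.sin τ • e₂)
    (hE : ∀ τ : ℝ, E τ = (-Real.sin τ) • e₁ + Real.cos τ • e₂)
    (hp : ∀ ν τ : ℝ, p ν τ = Real.cos ν • u τ + Real.sin ν • Ω)
    (Rstar : ℝ → ℝ → ℝ)
    (hR : ∀ ν τ : ℝ, Rstar ν τ =
      (fun s : ℝ => H (Real.cos s • p ν τ + Real.sin s • E τ)) 0 +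
        deriv (deriv (fun s : ℝ => H (Real.cos s • p ν τ + Real.sin s • E τ))) 0) :
    ∫ τ in (0:ℝ)..(2 * Real.pi), deriv (fun ν : ℝ => Rstar ν τ) 0 = 0 := by
  set φ : ℝ → ℝ := fun σ => fderiv ℝ H (u σ) Ω
  have hu_norm : ∀ τ, ‖u τ‖ = 1 := fun τ => by
    rw [hu]; exact norm_cos_smul_add_sin_smul he₁ he₂ h₁₂ τ
  have hE_u : ∀ τ, E τ = u (τ + π / 2) := fun τ => by
    rw [hE, hu, cos_add_pi_div_two, sin_add_pi_div_two]
  have huΩ : ∀ τ, ⟪u τ, Ω⟫ = 0 := fun τ => by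
    rw [hu, inner_add_left, real_inner_smul_left, real_inner_smul_left, h₁Ω, h₂Ω]; ring
  have huE : ∀ τ, ⟪u τ, E τ⟫ = 0 := fun τ => by
    simp only [hu, hE, inner_add_left, inner_add_right, real_inner_smul_left,
      real_inner_smul_right, real_inner_self_eq_norm_sq, he₁, he₂, real_inner_comm e₁ e₂, h₁₂]
    ring
  have hrot : ∀ τ s, cos s • u τ + sin s • E τ = u (τ + s) := fun τ s => by
    rw [hu, hE, hu, cos_add, sin_add]; module
  have hφ : ContDiff ℝ 2 φ := contDiff_fderiv_apply_comp hsmooth (by rw [funext hu]; fun_prop)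
    (fun σ => norm_ne_zero_iff.mp (by rw [hu_norm]; exact one_ne_zero)) Ω
  have hφ_periodic : Periodic φ (2 * π) := fun σ => by
    simp only [φ, hu, cos_add_two_pi, sin_add_two_pi]
  have key : ∀ τ, deriv (fun ν => Rstar ν τ) 0 = deriv (deriv φ) τ := fun τ => by
    have hRτ : (fun ν => Rstar ν τ) = fun ν =>
        radiusOfCurvature fun s => H (cos s • (cos ν • u τ + sin ν • Ω) + sin s • E τ) :=
      funext fun ν => by rw [hR, hp]; rfl
    rw [hRτ, deriv_radiusOfCurvature_greatCircle hsmooth (hu_norm τ) (hE_u τ ▸ hu_norm _) hΩ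
      (huE τ) (huΩ τ) (by rw [real_inner_comm, hE_u]; exact huΩ _)]
    simpa only [hrot, add_zero] using deriv_deriv_comp_const_add φ τ 0
  rw [intervalIntegral.integral_congr fun τ _ => key τ]
  exact hφ_periodic.deriv.intervalIntegral_deriv_eq_zero (hφ.deriv' (n := 1))

theorem belt_derivative_integral_vanishes
    (B : Set (EuclideanSpace ℝ (Fin 3)))
    (hBconv : Convex ℝ B) (hBcomp : IsCompact B) (hBint : (interior B).Nonempty)
    (H : EuclideanSpace ℝ (Fin 3) → ℝ)
    (hH : ∀ x : EuclideanSpace ℝ (Fin 3), H x = sSup ((fun y => ⟪x, y⟫) '' B))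
    (hsmooth : ContDiffOn ℝ 3 H {(0 : EuclideanSpace ℝ (Fin 3))}ᶜ)
    (Ω e₁ e₂ : EuclideanSpace ℝ (Fin 3))
    (hΩ : ‖Ω‖ = 1) (he₁ : ‖e₁‖ = 1) (he₂ : ‖e₂‖ = 1)
    (h₁₂ : ⟪e₁, e₂⟫ = 0) (h₁Ω : ⟪e₁, Ω⟫ = 0) (h₂Ω : ⟪e₂, Ω⟫ = 0)
    (u E : ℝ → EuclideanSpace ℝ (Fin 3)) (p : ℝ → ℝ → EuclideanSpace ℝ (Fin 3))
    (hu : ∀ τ : ℝ, u τ = Real.cos τ • e₁ + Real.sin τ • e₂)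
    (hE : ∀ τ : ℝ, E τ = (-Real.sin τ) • e₁ + Real.cos τ • e₂)
    (hp : ∀ ν τ : ℝ, p ν τ = Real.cos ν • u τ + Real.sin ν • Ω)
    (Rstar : ℝ → ℝ → ℝ)
    (hR : ∀ ν τ : ℝ, Rstar ν τ =
      (fun s : ℝ => H (Real.cos s • p ν τ + Real.sin s • E τ)) 0 +
        deriv (deriv (fun s : ℝ => H (Real.cos s • p ν τ + Real.sin s • E τ))) 0) :
    ∫ τ in (0:ℝ)..(2 * Real.pi), deriv (fun ν : ℝ => Rstar ν τ) 0 = 0 :=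
  belt_derivative_integral_vanishes_general H hsmooth Ω e₁ e₂ hΩ he₁ he₂ h₁₂ h₁Ω h₂Ω u E p hu hE hp
    Rstar hR
end
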